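/- For w ∈ W̃ with reduced decomposition w = s₁⋯s_r·u (s_i ∈ S, u ∈ Ω, r = ℓ(w)), put i_w^* := i_{u⁻¹} ⋆ (i_{s_r} + (1 − q_{s_r})·i_1) ⋆ ⋯ ⋆ (i_{s_1} + (1 − q_{s_1})·i_1) ∈ H(G,I). Then i_w ⋆ i_w^* = i_w^* ⋆ i_w = q_w·i_1. -/

import Mathlib

open scoped Pointwise

/-! ## Setting

`G` is a group with subgroups `I` and `N` such that `T := I ⊓ N` is normal in `N`, and
`W̃ := N/T` is presented via a surjective homomorphism `π : N →* W̃` whose kernel consists of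
the elements of `N` lying in `I`.  `W̃ = W_aff ⋊ Ω` is an internal semidirect product, where
`W_aff` carries a Coxeter system `cs` (with simple reflections indexed by `B`), the length
function `ℓ` of `cs` is extended to `W̃` by `ℓ (w * u) = ℓ w` for `w ∈ W_aff`, `u ∈ Ω`, and
the axioms (T0), (T3), (T4), (TΩ), (TS), (TF) hold. -/

/-- The double coset `I·n·I ⊆ G` attached to an element `w ∈ W̃ = N/T`, described as the union
of `I·n·I` over all representatives `n ∈ N` of `w` (these double cosets all coincide, since any
two representatives differ by an element of `T = I ⊓ N ⊆ I`). -/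
def IwI {G : Type} [Group G] {W : Type} [Group W] (I : Subgroup G) {N : Subgroup G}
    (π : N →* W) (w : W) : Set G :=
  {g : G | ∃ n : N, π n = w ∧ ∃ i ∈ I, ∃ j ∈ I, g = i * (n : G) * j}

/-- The basis element `i_w = 1_{IwI} : G → ℤ` of the Iwahori–Hecke ring. -/
noncomputable def iw {G : Type} [Group G] {W : Type} [Group W] (I : Subgroup G) {N : Subgroup G}
    (π : N →* W) (w : W) : G → ℤ :=
  (IwI I π w).indicator fun _ => (1 : ℤ)

/-- Convolution of `ℤ`-valued functions on `G` relative to `I`: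
`(f ⋆ f')(x) = Σ_{yI ∈ G/I} f(y)·f'(y⁻¹x)` (the value of `f` at a left coset `yI` is computed
at a chosen representative; this is independent of the choices when `f` is right `I`-invariant
and `f'` is left `I`-invariant). -/
noncomputable def hconv {G : Type} [Group G] (I : Subgroup G) (f f' : G → ℤ) : G → ℤ :=
  fun x => ∑ᶠ y : G ⧸ I, f (Quotient.out y) * f' ((Quotient.out y)⁻¹ * x)

/-- The left cosets of `I` contained in a (right `I`-stable) subset `A ⊆ G`, viewed as the
image of `A` in `G/I`. -/
def leftCosetsIn {G : Type} [Group G] (I : Subgroup G) (A : Set G) : Set (G ⧸ I) :=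
  QuotientGroup.mk '' A

/-- A function `f : G → ℤ` belongs to the Iwahori–Hecke ring `H(G,I)` iff it is left and right
`I`-invariant and vanishes outside finitely many double cosets of `I`. -/
def IsHeckeElt {G : Type} [Group G] {W : Type} [Group W] (I : Subgroup G) {N : Subgroup G}
    (π : N →* W) (f : G → ℤ) : Prop :=
  (∀ i ∈ I, ∀ g : G, f (i * g) = f g) ∧ (∀ i ∈ I, ∀ g : G, f (g * i) = f g) ∧
    {w : W | ∃ g ∈ IwI I π w, f g ≠ 0}.Finite

/-- The data and axioms of the Iwahori–Matsumoto setting. -/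
structure IwahoriHeckeSetup (G W B : Type) [Group G] [Group W] (M : CoxeterMatrix B) where
  /-- the "Iwahori" subgroup -/
  I : Subgroup G
  /-- the subgroup `N` -/
  N : Subgroup G
  /-- the quotient map `N → W̃ = N/T`, `T = I ∩ N` -/
  π : N →* W
  π_surjective : Function.Surjective π
  /-- the kernel of `π` is exactly `T = I ∩ N` (so `T` is normal in `N` and `W̃ = N/T`) -/
  π_ker : ∀ n : N, π n = 1 ↔ (n : G) ∈ I
  /-- the normal subgroup `W_aff` of `W̃` -/
  Waff : Subgroup W
  /-- the subgroup `Ω` of `W̃` -/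
  Om : Subgroup W
  Waff_normal : Waff.Normal
  /-- `W̃ = W_aff · Ω` -/
  sd_prod : ∀ w : W, ∃ wa ∈ Waff, ∃ u ∈ Om, w = wa * u
  /-- `W_aff ∩ Ω = 1` -/
  sd_disj : Waff ⊓ Om = ⊥
  /-- the Coxeter system `(W_aff, S)`, `S = {simple b | b : B}` -/
  cs : CoxeterSystem M Waff
  /-- the length function of `(W_aff, S)`, extended to `W̃` -/
  len : W → ℕ
  len_spec : ∀ (wa : Waff) (u : Om), len ((wa : W) * (u : W)) = cs.length wa
  /-- `q w` = the number of left cosets of `I` contained in `IwI` -/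
  q : W → ℕ
  /-- (T0): `G` is covered by the double cosets `IwI`, `w ∈ W̃` ... -/
  T0_cover : ∀ g : G, ∃ w : W, g ∈ IwI I π w
  /-- (T0): ... and distinct double cosets are disjoint -/
  T0_disjoint : ∀ w w' : W, w ≠ w' → Disjoint (IwI I π w) (IwI I π w')
  /-- (T3): `sIw ⊆ IwI ∪ IswI` for all `s ∈ S`, `w ∈ W̃` -/
  T3 : ∀ (b : B) (w : W) (ns nw : N), π ns = (cs.simple b : W) → π nw = w →
      ∀ i ∈ I, (ns : G) * i * (nw : G) ∈ IwI I π w ∪ IwI I π ((cs.simple b : W) * w)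
  /-- (T4): `sIs ⊄ I` for all `s ∈ S` -/
  T4 : ∀ (b : B) (ns ns' : N), π ns = (cs.simple b : W) → π ns' = (cs.simple b : W) →
      ¬ (∀ i ∈ I, (ns : G) * i * (ns' : G) ∈ I)
  /-- (TΩ): representatives in `N` of elements of `Ω` normalize `I` -/
  TOm : ∀ n : N, π n ∈ Om → ∀ i ∈ I, (n : G) * i * (n : G)⁻¹ ∈ I
  /-- (TS): `uSu⁻¹ = S` for all `u ∈ Ω` -/
  TS : ∀ u ∈ Om, ∀ b : B, ∃ b' : B, u * (cs.simple b : W) * u⁻¹ = (cs.simple b' : W)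
  /-- (TF): every double coset `IwI` is a finite union of left cosets of `I`, and `q w` is
  their number -/
  TF : ∀ w : W, (leftCosetsIn I (IwI I π w)).Finite ∧
      q w = (leftCosetsIn I (IwI I π w)).ncard

/-- For a word `l = [s₁, …, s_r]` of simple reflections and `u ∈ Ω`, the element
`i_w^* := i_{u⁻¹} ⋆ (i_{s_r} + (1 − q_{s_r})·i_1) ⋆ ⋯ ⋆ (i_{s_1} + (1 − q_{s_1})·i_1)`
of `H(G,I)` attached to the decomposition `w = s₁⋯s_r·u`. -/
noncomputable def iwStar {G W B : Type} [Group G] [Group W] {M : CoxeterMatrix B}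
    (D : IwahoriHeckeSetup G W B M) (l : List B) (u : W) : G → ℤ :=
  (l.reverse.map fun b => fun g : G =>
      iw D.I D.π (D.cs.simple b : W) g +
        (1 - (D.q (D.cs.simple b : W) : ℤ)) * iw D.I D.π 1 g).foldl
    (hconv D.I) (iw D.I D.π u⁻¹)

/-!
Induct on the reduced word. If `w = s·w'` with `ℓ(w) = ℓ(w') + 1`, then `i_w = i_s ⋆ i_{w'}` and
`q_w = q_s·q_{w'}`, while `i_w^* = i_{w'}^* ⋆ (i_s + (1 − q_s)·i_1)`; by associativity the claim
reduces to `i_s ⋆ (i_s + (1 − q_s)·i_1) = q_s·i_1`, i.e. to the quadratic relation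
`i_s ⋆ i_s = q_s·i_1 + (q_s − 1)·i_s`, and for `ℓ(w) = 0` to `i_u ⋆ i_{u⁻¹} = i_1`, `q_u = 1`.

The product formula comes from `IsI·IwI = IswI`, proved from (T3) by induction on `ℓ(w)`,
together with the fact that the `IsI`-factor of an element of `IswI` is unique up to `I`.
Multiplicativity of `q` then follows because `f ↦ Σ_{yI ∈ G/I} f(y)` is multiplicative for
convolution and sends `i_w` to `q_w`.
-/
section Convolution

variable {G : Type} [Group G] {I : Subgroup G}

def cosetSupport (I : Subgroup G) (f : G → ℤ) : Set (G ⧸ I) :=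
  Function.support fun c => f c.out

noncomputable def cosetSum (I : Subgroup G) (f : G → ℤ) : ℤ :=
  ∑ᶠ c : G ⧸ I, f c.out

def IsLeftInvariant (I : Subgroup G) {M : Type*} (f : G → M) : Prop :=
  ∀ i ∈ I, ∀ g, f (i * g) = f g

def IsRightInvariant (I : Subgroup G) {M : Type*} (f : G → M) : Prop :=
  ∀ i ∈ I, ∀ g, f (g * i) = f g

/-- Elements of `H(G,I)`, with finiteness measured in left cosets rather than double cosets;
under (TF) this is equivalent to `IsHeckeElt`. -/
structure IsHeckeFunction (I : Subgroup G) (f : G → ℤ) : Prop where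
  left_invariant : IsLeftInvariant I f
  right_invariant : IsRightInvariant I f
  finite_cosetSupport : (cosetSupport I f).Finite

lemma IsRightInvariant.apply_out_mk {M : Type*} {f : G → M} (hf : IsRightInvariant I f)
    (g : G) : f (g : G ⧸ I).out = f g := by
  obtain ⟨i, hi⟩ := QuotientGroup.mk_out_eq_mul I g
  rw [hi, hf i i.2]

lemma IsRightInvariant.finsum_apply_mul_out {M : Type*} [AddCommMonoid M] {φ : G → M}
    (hφ : IsRightInvariant I φ) (a : G) :
    ∑ᶠ c : G ⧸ I, φ (a * c.out) = ∑ᶠ c : G ⧸ I, φ c.out := by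
  rw [← finsum_comp_equiv (MulAction.toPerm a) (f := fun c : G ⧸ I => φ c.out)]
  refine finsum_congr fun c => ?_
  rw [MulAction.toPerm_apply, ← QuotientGroup.out_eq' c, MulAction.Quotient.smul_mk,
    smul_eq_mul, hφ.apply_out_mk, QuotientGroup.out_eq']

lemma IsRightInvariant.finite_support_mul_out {f : G → ℤ} (hf : IsRightInvariant I f)
    (hfin : (cosetSupport I f).Finite) (a : G) :
    (Function.support fun c : G ⧸ I => f (a * c.out)).Finite := by
  have h : (Function.support fun c : G ⧸ I => f (a * c.out)) = (a • ·) ⁻¹' cosetSupport I f := by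
    ext c
    simp only [Function.mem_support, Set.mem_preimage, cosetSupport]
    rw [← QuotientGroup.out_eq' c, MulAction.Quotient.smul_mk, smul_eq_mul, hf.apply_out_mk,
      QuotientGroup.out_eq']
  rw [h]
  exact hfin.preimage (MulAction.injective a).injOn

lemma hconv_eq_sum {f : G → ℤ} (hf : (cosetSupport I f).Finite) (g : G → ℤ) (x : G) :
    hconv I f g x = ∑ c ∈ hf.toFinset, f c.out * g (c.out⁻¹ * x) :=
  finsum_eq_sum_of_support_subset _ fun _ hc =>
    hf.mem_toFinset.mpr (left_ne_zero_of_mul hc)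

lemma finsum_hconv_mul {f g ψ : G → ℤ} (hf : (cosetSupport I f).Finite)
    (hg : IsRightInvariant I g) (hgfin : (cosetSupport I g).Finite) (hψ : IsRightInvariant I ψ) :
    ∑ᶠ c : G ⧸ I, hconv I f g c.out * ψ c.out =
      ∑ᶠ c : G ⧸ I, f c.out * ∑ᶠ d : G ⧸ I, g d.out * ψ (c.out * d.out) := by
  have hinner (c : G ⧸ I) : ∑ᶠ d : G ⧸ I, g (c.out⁻¹ * d.out) * ψ d.out =
      ∑ᶠ d : G ⧸ I, g d.out * ψ (c.out * d.out) := by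
    have hφ : IsRightInvariant I fun t => g (c.out⁻¹ * t) * ψ t := fun i hi t => by
      simp only [← mul_assoc, hg i hi, hψ i hi]
    rw [← hφ.finsum_apply_mul_out c.out]
    simp only [inv_mul_cancel_left]
  calc ∑ᶠ c : G ⧸ I, hconv I f g c.out * ψ c.out
      = ∑ᶠ d : G ⧸ I, ∑ c ∈ hf.toFinset, f c.out * (g (c.out⁻¹ * d.out) * ψ d.out) := by
        simp only [hconv_eq_sum hf, Finset.sum_mul, mul_assoc]
    _ = ∑ c ∈ hf.toFinset, f c.out * ∑ᶠ d : G ⧸ I, g (c.out⁻¹ * d.out) * ψ d.out := by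
        rw [finsum_sum_comm]
        · simp only [mul_finsum]
        · intro c _
          refine ((hg.finite_support_mul_out hgfin c.out⁻¹).subset fun d hd => ?_)
          exact left_ne_zero_of_mul (right_ne_zero_of_mul hd)
    _ = _ := by
        simp only [hinner]
        exact (finsum_eq_sum_of_support_subset _ fun _ hc =>
          hf.mem_toFinset.mpr (left_ne_zero_of_mul hc)).symm

lemma IsHeckeFunction.hconv {f g : G → ℤ} (hf : IsHeckeFunction I f) (hg : IsHeckeFunction I g) :
    IsHeckeFunction I (hconv I f g) where
  left_invariant i hi x := by
    have hφ : IsRightInvariant I fun t => f t * g (t⁻¹ * (i * x)) := fun k hk t => by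
      simp only [mul_inv_rev, mul_assoc, hf.right_invariant k hk,
        hg.left_invariant _ (I.inv_mem hk)]
    rw [_root_.hconv, ← hφ.finsum_apply_mul_out i]
    simp only [mul_inv_rev, mul_assoc, inv_mul_cancel_left, hf.left_invariant i hi, _root_.hconv]
  right_invariant i hi x := by
    simp only [_root_.hconv, ← mul_assoc, hg.right_invariant i hi]
  finite_cosetSupport := by
    refine (hf.finite_cosetSupport.biUnion fun c _ => hg.right_invariant.finite_support_mul_out
      hg.finite_cosetSupport c.out⁻¹).subset fun d hd => ?_
    obtain ⟨c, hc⟩ := not_forall.mp (mt finsum_eq_zero_of_forall_eq_zero hd)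
    exact Set.mem_biUnion (left_ne_zero_of_mul hc) (right_ne_zero_of_mul hc)

lemma IsHeckeFunction.add {f g : G → ℤ} (hf : IsHeckeFunction I f) (hg : IsHeckeFunction I g) :
    IsHeckeFunction I (f + g) where
  left_invariant i hi x := by
    simp only [Pi.add_apply, hf.left_invariant i hi, hg.left_invariant i hi]
  right_invariant i hi x := by
    simp only [Pi.add_apply, hf.right_invariant i hi, hg.right_invariant i hi]
  finite_cosetSupport :=
    (hf.finite_cosetSupport.union hg.finite_cosetSupport).subset (Function.support_add _ _)

lemma IsHeckeFunction.smul {f : G → ℤ} (hf : IsHeckeFunction I f) (a : ℤ) :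
    IsHeckeFunction I (a • f) where
  left_invariant i hi x := by simp only [Pi.smul_apply, hf.left_invariant i hi]
  right_invariant i hi x := by simp only [Pi.smul_apply, hf.right_invariant i hi]
  finite_cosetSupport := hf.finite_cosetSupport.subset (Function.support_const_smul_subset a _)

lemma hconv_assoc {f g h : G → ℤ} (hf : (cosetSupport I f).Finite) (hg : IsHeckeFunction I g)
    (hh : IsLeftInvariant I h) :
    hconv I (hconv I f g) h = hconv I f (hconv I g h) := by
  funext x
  have hψ : IsRightInvariant I fun t => h (t⁻¹ * x) := fun i hi t => by
    show h ((t * i)⁻¹ * x) = h (t⁻¹ * x)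
    rw [mul_inv_rev, mul_assoc, hh _ (I.inv_mem hi)]
  refine (finsum_hconv_mul hf hg.right_invariant hg.finite_cosetSupport hψ).trans ?_
  simp only [hconv, mul_inv_rev, mul_assoc]

lemma cosetSum_hconv {f g : G → ℤ} (hf : (cosetSupport I f).Finite) (hg : IsRightInvariant I g)
    (hgfin : (cosetSupport I g).Finite) :
    cosetSum I (hconv I f g) = cosetSum I f * cosetSum I g := by
  have h := finsum_hconv_mul hf hg hgfin (ψ := fun _ => 1) fun _ _ _ => rfl
  simp only [mul_one] at h
  rw [cosetSum, h, cosetSum, finsum_mul]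
  simp only [cosetSum, mul_finsum]

lemma hconv_add_left {f₁ f₂ : G → ℤ} (hf₁ : (cosetSupport I f₁).Finite)
    (hf₂ : (cosetSupport I f₂).Finite) (g : G → ℤ) :
    hconv I (f₁ + f₂) g = hconv I f₁ g + hconv I f₂ g := by
  funext x
  refine (finsum_congr fun c => add_mul _ _ _).trans (finsum_add_distrib ?_ ?_)
  · exact hf₁.subset fun c hc => left_ne_zero_of_mul hc
  · exact hf₂.subset fun c hc => left_ne_zero_of_mul hc

lemma hconv_add_right {f : G → ℤ} (hf : (cosetSupport I f).Finite) (g₁ g₂ : G → ℤ) :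
    hconv I f (g₁ + g₂) = hconv I f g₁ + hconv I f g₂ := by
  funext x
  refine (finsum_congr fun c => mul_add _ _ _).trans (finsum_add_distrib ?_ ?_)
  · exact hf.subset fun c hc => left_ne_zero_of_mul hc
  · exact hf.subset fun c hc => left_ne_zero_of_mul hc

lemma hconv_smul_left (a : ℤ) (f g : G → ℤ) : hconv I (a • f) g = a • hconv I f g := by
  funext x
  simp only [hconv, Pi.smul_apply, smul_eq_mul, mul_finsum, mul_assoc]

lemma hconv_smul_right (a : ℤ) (f g : G → ℤ) : hconv I f (a • g) = a • hconv I f g := by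
  funext x
  simp only [hconv, Pi.smul_apply, smul_eq_mul, mul_finsum, mul_left_comm]

lemma hconv_indicator_left {f : G → ℤ} (hf : IsLeftInvariant I f) :
    hconv I ((I : Set G).indicator fun _ => 1) f = f := by
  funext x
  have hmem (c : G ⧸ I) : c.out ∈ I ↔ c = ((1 : G) : G ⧸ I) := by
    rw [← QuotientGroup.out_eq' c, QuotientGroup.eq, mul_one, inv_mem_iff, QuotientGroup.out_eq']
  rw [hconv, finsum_eq_single _ ((1 : G) : G ⧸ I)]
  · have h1 := (hmem _).mpr rfl
    rw [Set.indicator_of_mem h1, one_mul, hf _ (I.inv_mem h1)]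
  · intro c hc
    rw [Set.indicator_of_notMem (mt (hmem c).mp hc), zero_mul]

lemma hconv_indicator_right {f : G → ℤ} (hf : IsRightInvariant I f) :
    hconv I f ((I : Set G).indicator fun _ => 1) = f := by
  funext x
  rw [hconv, finsum_eq_single _ (x : G ⧸ I)]
  · rw [hf.apply_out_mk, Set.indicator_of_mem, mul_one]
    rw [SetLike.mem_coe, ← QuotientGroup.eq, QuotientGroup.out_eq']
  · intro c hc
    rw [Set.indicator_of_notMem, mul_zero]
    rwa [SetLike.mem_coe, ← QuotientGroup.eq, QuotientGroup.out_eq']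

lemma hconv_hconv_rev_eq_smul {a b a' b' : G → ℤ} (ha : IsHeckeFunction I a)
    (hb : IsHeckeFunction I b) (ha' : IsHeckeFunction I a') (hb' : IsHeckeFunction I b')
    {α β : ℤ} (haa' : hconv I a a' = α • (I : Set G).indicator fun _ => 1)
    (hbb' : hconv I b b' = β • (I : Set G).indicator fun _ => 1) :
    hconv I (hconv I a b) (hconv I b' a') = (α * β) • (I : Set G).indicator fun _ => 1 := by
  rw [hconv_assoc ha.finite_cosetSupport hb (hb'.hconv ha').left_invariant,
    ← hconv_assoc hb.finite_cosetSupport hb' ha'.left_invariant, hbb', hconv_smul_left,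
    hconv_indicator_left ha'.left_invariant, hconv_smul_right, haa', smul_smul, mul_comm]

end Convolution

section IndicatorOfDoubleCoset

variable {G W : Type} [Group G] [Group W] {I : Subgroup G} {N : Subgroup G} {π : N →* W}
  {w : W} {g : G}

lemma iw_of_mem (h : g ∈ IwI I π w) : iw I π w g = 1 := Set.indicator_of_mem h _

lemma iw_of_notMem (h : g ∉ IwI I π w) : iw I π w g = 0 := Set.indicator_of_notMem h _

lemma mem_of_iw_ne_zero (h : iw I π w g ≠ 0) : g ∈ IwI I π w := by
  by_contra hg
  exact h (iw_of_notMem hg)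

lemma iw_eq_iw_of_mem_iff {g' : G} (h : g ∈ IwI I π w ↔ g' ∈ IwI I π w) :
    iw I π w g = iw I π w g' := by
  by_cases hg : g ∈ IwI I π w
  · rw [iw_of_mem hg, iw_of_mem (h.mp hg)]
  · rw [iw_of_notMem hg, iw_of_notMem (mt h.mpr hg)]

end IndicatorOfDoubleCoset

namespace IwahoriHeckeSetup

variable {G W B : Type} [Group G] [Group W] {M : CoxeterMatrix B} (D : IwahoriHeckeSetup G W B M)

section DoubleCosets

variable {D} {v w : W} {g h i : G}

lemma rep_mem_IwI (n : D.N) : (n : G) ∈ IwI D.I D.π (D.π n) :=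
  ⟨n, rfl, 1, D.I.one_mem, 1, D.I.one_mem, by simp⟩

lemma exists_eq_mul_rep_mul {n : D.N} (hn : D.π n = w) (hg : g ∈ IwI D.I D.π w) :
    ∃ i ∈ D.I, ∃ j ∈ D.I, g = i * n * j := by
  obtain ⟨m, hm, i, hi, j, hj, rfl⟩ := hg
  have hnm : ((n⁻¹ * m : D.N) : G) ∈ D.I := (D.π_ker _).mp (by simp [hn, hm])
  exact ⟨i, hi, _, D.I.mul_mem hnm hj, by simp [mul_assoc]⟩

lemma mul_mem_IwI_left (hi : i ∈ D.I) (hg : g ∈ IwI D.I D.π w) : i * g ∈ IwI D.I D.π w := by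
  obtain ⟨n, hn, a, ha, b, hb, rfl⟩ := hg
  exact ⟨n, hn, i * a, D.I.mul_mem hi ha, b, hb, by group⟩

lemma mul_mem_IwI_right (hi : i ∈ D.I) (hg : g ∈ IwI D.I D.π w) : g * i ∈ IwI D.I D.π w := by
  obtain ⟨n, hn, a, ha, b, hb, rfl⟩ := hg
  exact ⟨n, hn, a, ha, b * i, D.I.mul_mem hb hi, by group⟩

lemma mul_mem_IwI_left_iff (hi : i ∈ D.I) : i * g ∈ IwI D.I D.π w ↔ g ∈ IwI D.I D.π w :=
  ⟨fun h => by simpa using mul_mem_IwI_left (D.I.inv_mem hi) h, mul_mem_IwI_left hi⟩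

lemma mul_mem_IwI_right_iff (hi : i ∈ D.I) : g * i ∈ IwI D.I D.π w ↔ g ∈ IwI D.I D.π w :=
  ⟨fun h => by simpa using mul_mem_IwI_right (D.I.inv_mem hi) h, mul_mem_IwI_right hi⟩

lemma IwI_one : IwI D.I D.π 1 = D.I := by
  ext g
  refine ⟨fun hg => ?_, fun hg => ⟨1, map_one _, 1, D.I.one_mem, g, hg, by simp⟩⟩
  obtain ⟨i, hi, j, hj, rfl⟩ := exists_eq_mul_rep_mul (map_one D.π) hg
  simpa using D.I.mul_mem hi hj

lemma inv_mem_IwI (hg : g ∈ IwI D.I D.π w) : g⁻¹ ∈ IwI D.I D.π w⁻¹ := by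
  obtain ⟨n, hn, i, hi, j, hj, rfl⟩ := hg
  exact ⟨n⁻¹, by rw [map_inv, hn], j⁻¹, D.I.inv_mem hj, i⁻¹, D.I.inv_mem hi, by simp [mul_assoc]⟩

lemma eq_of_mem_IwI (hv : g ∈ IwI D.I D.π v) (hw : g ∈ IwI D.I D.π w) : v = w := by
  by_contra hne
  exact Set.disjoint_left.mp (D.T0_disjoint v w hne) hv hw

lemma out_mem_IwI_iff (c : G ⧸ D.I) :
    c.out ∈ IwI D.I D.π w ↔ c ∈ leftCosetsIn D.I (IwI D.I D.π w) := by
  refine ⟨fun hc => ⟨c.out, hc, QuotientGroup.out_eq' c⟩, ?_⟩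
  rintro ⟨g, hg, rfl⟩
  obtain ⟨i, hi⟩ := QuotientGroup.mk_out_eq_mul D.I g
  rw [hi]
  exact mul_mem_IwI_right i.2 hg

end DoubleCosets

section SimpleReflections

variable {D} {w : W} {g h : G}

lemma simple_mul_self (b : B) : (D.cs.simple b : W) * D.cs.simple b = 1 := by
  rw [← Subgroup.coe_mul, D.cs.simple_mul_simple_self, Subgroup.coe_one]

lemma simple_inv (b : B) : (D.cs.simple b : W)⁻¹ = D.cs.simple b := by
  rw [← Subgroup.coe_inv, D.cs.inv_simple]

lemma simple_ne_one (b : B) : (D.cs.simple b : W) ≠ 1 := by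
  intro h
  have := D.cs.length_simple b
  rw [OneMemClass.coe_eq_one.mp h, D.cs.length_one] at this
  exact zero_ne_one this

lemma mul_mem_IwI_or_IwI_simple_mul {b : B} (hg : g ∈ IwI D.I D.π (D.cs.simple b))
    (hh : h ∈ IwI D.I D.π w) :
    g * h ∈ IwI D.I D.π w ∪ IwI D.I D.π (D.cs.simple b * w) := by
  obtain ⟨ns, hns, i, hi, j, hj, rfl⟩ := hg
  obtain ⟨nw, hnw, i', hi', j', hj', rfl⟩ := hh
  have heq : i * ns * j * (i' * nw * j') = i * (ns * (j * i') * nw) * j' := by group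
  rw [heq]
  exact (D.T3 b w ns nw hns hnw _ (D.I.mul_mem hj hi')).imp
    (mul_mem_IwI_right hj' <| mul_mem_IwI_left hi ·)
    (mul_mem_IwI_right hj' <| mul_mem_IwI_left hi ·)

lemma mul_mem_IwI_or_IwI_mul_simple {b : B} (hg : g ∈ IwI D.I D.π w)
    (hh : h ∈ IwI D.I D.π (D.cs.simple b)) :
    g * h ∈ IwI D.I D.π w ∪ IwI D.I D.π (w * D.cs.simple b) := by
  have hinv := mul_mem_IwI_or_IwI_simple_mul (by simpa [simple_inv] using inv_mem_IwI hh)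
    (inv_mem_IwI hg)
  rw [← mul_inv_rev] at hinv
  rcases hinv with hk | hk
  · exact Or.inl (by simpa using inv_mem_IwI hk)
  · exact Or.inr (by simpa [simple_inv] using inv_mem_IwI hk)

lemma mul_mem_I_or_IwI_simple {b : B} (hg : g ∈ IwI D.I D.π (D.cs.simple b))
    (hh : h ∈ IwI D.I D.π (D.cs.simple b)) :
    g * h ∈ D.I ∨ g * h ∈ IwI D.I D.π (D.cs.simple b) := by
  have := mul_mem_IwI_or_IwI_simple_mul hg hh
  rwa [simple_mul_self, IwI_one, Set.mem_union, or_comm] at this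

end SimpleReflections

section Omega

variable {D} {u v : W} {n : D.N} {g h i : G}

lemma conj_mem_I (hn : D.π n ∈ D.Om) (hi : i ∈ D.I) : (n : G) * i * (n : G)⁻¹ ∈ D.I :=
  D.TOm n hn i hi

lemma inv_conj_mem_I (hn : D.π n ∈ D.Om) (hi : i ∈ D.I) : (n : G)⁻¹ * i * n ∈ D.I := by
  simpa using D.TOm n⁻¹ (by simpa using D.Om.inv_mem hn) i hi

lemma mem_IwI_omega_iff (hu : u ∈ D.Om) (hn : D.π n = u) :
    g ∈ IwI D.I D.π u ↔ (n : G)⁻¹ * g ∈ D.I := by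
  refine ⟨fun hg => ?_, fun hg => ⟨n, hn, 1, D.I.one_mem, _, hg, by group⟩⟩
  obtain ⟨i, hi, j, hj, rfl⟩ := exists_eq_mul_rep_mul hn hg
  have : (n : G)⁻¹ * (i * n * j) = (n : G)⁻¹ * i * n * j := by group
  exact this ▸ D.I.mul_mem (inv_conj_mem_I (hn ▸ hu) hi) hj

lemma mul_mem_IwI_omega_mul (hu : u ∈ D.Om) (hg : g ∈ IwI D.I D.π u)
    (hh : h ∈ IwI D.I D.π v) : g * h ∈ IwI D.I D.π (u * v) := by
  obtain ⟨n, hn⟩ := D.π_surjective u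
  obtain ⟨m, hm, i, hi, j, hj, rfl⟩ := hh
  have hk := (mem_IwI_omega_iff hu hn).mp hg
  have heq : g * (i * m * j) = (n * ((n : G)⁻¹ * g * i) * (n : G)⁻¹) * (n * m : D.N) * j := by
    push_cast; group
  rw [heq]
  exact ⟨_, by rw [map_mul, hn, hm], _, conj_mem_I (hn ▸ hu) (D.I.mul_mem hk hi), j, hj, rfl⟩

lemma mul_mem_IwI_mul_omega (hu : u ∈ D.Om) (hg : g ∈ IwI D.I D.π v)
    (hh : h ∈ IwI D.I D.π u) : g * h ∈ IwI D.I D.π (v * u) := by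
  obtain ⟨n, hn⟩ := D.π_surjective u
  obtain ⟨m, hm, i, hi, j, hj, rfl⟩ := hg
  have hk := (mem_IwI_omega_iff hu hn).mp hh
  have heq : i * m * j * h = i * (m * n : D.N) * (((n : G)⁻¹ * j * n) * ((n : G)⁻¹ * h)) := by
    push_cast; group
  rw [heq]
  exact ⟨_, by rw [map_mul, hn, hm], i, hi, _,
    D.I.mul_mem (inv_conj_mem_I (hn ▸ hu) hj) hk, rfl⟩

end Omega

section Length

variable {D} {u w : W}

lemma len_mul_of_mem_Om (wa : D.Waff) (hu : u ∈ D.Om) : D.len (wa * u) = D.cs.length wa :=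
  D.len_spec wa ⟨u, hu⟩

lemma mem_Om_of_len_eq_zero (h : D.len w = 0) : w ∈ D.Om := by
  obtain ⟨wa, hwa, u, hu, rfl⟩ := D.sd_prod w
  lift wa to D.Waff using hwa
  rw [len_mul_of_mem_Om wa hu, D.cs.length_eq_zero_iff] at h
  simpa [h] using hu

/-- The right factor `t` is `u⁻¹ s u` for a right descent `s` of the `W_aff`-part of `w = wa * u`;
it is simple by (TS). -/
lemma exists_eq_mul_simple (h : 0 < D.len w) :
    ∃ v t, w = v * D.cs.simple t ∧ D.len v + 1 = D.len w ∧
      ∀ b, D.len (D.cs.simple b * w) = D.len w + 1 →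
        D.len (D.cs.simple b * v) = D.len v + 1 := by
  obtain ⟨wa, hwa, u, hu, rfl⟩ := D.sd_prod w
  lift wa to D.Waff using hwa
  rw [len_mul_of_mem_Om wa hu] at h ⊢
  obtain ⟨s, hs⟩ := D.cs.exists_rightDescent_of_ne_one (w := wa) (by rintro rfl; simp at h)
  rw [D.cs.isRightDescent_iff] at hs
  obtain ⟨t, ht⟩ := D.TS u⁻¹ (D.Om.inv_mem hu) s
  refine ⟨(wa * D.cs.simple s : D.Waff) * u, t, ?_, by rw [len_mul_of_mem_Om _ hu, hs], ?_⟩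
  · rw [← ht, inv_inv, Subgroup.coe_mul]
    simp only [mul_assoc, mul_inv_cancel_left]
    rw [← mul_assoc (D.cs.simple s : W), simple_mul_self, one_mul]
  intro b hb
  rw [← mul_assoc, ← Subgroup.coe_mul, len_mul_of_mem_Om _ hu] at hb
  rw [← mul_assoc, ← Subgroup.coe_mul, len_mul_of_mem_Om _ hu, len_mul_of_mem_Om _ hu,
    ← mul_assoc]
  have hle := D.cs.length_mul_le (D.cs.simple b * wa * D.cs.simple s) (D.cs.simple s)
  rw [mul_assoc _ (D.cs.simple s), D.cs.simple_mul_simple_self, mul_one, D.cs.length_simple] at hle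
  rcases D.cs.length_simple_mul (wa * D.cs.simple s) b with h' | h' <;>
    rw [← mul_assoc] at h' <;> omega

variable (D) in
lemma len_of_reduced_cons (hu : u ∈ D.Om) {b : B} {l : List B}
    (hred : (b :: l).length = D.len (D.cs.wordProd (b :: l) * u)) :
    l.length = D.len (D.cs.wordProd l * u) ∧
      D.len (D.cs.simple b * (D.cs.wordProd l * u)) = D.len (D.cs.wordProd l * u) + 1 := by
  rw [len_mul_of_mem_Om _ hu] at hred
  have hred' : D.cs.IsReduced l := by
    simpa using CoxeterSystem.IsReduced.drop (cs := D.cs) hred.symm 1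
  rw [← mul_assoc, ← Subgroup.coe_mul, ← D.cs.wordProd_cons, len_mul_of_mem_Om _ hu,
    len_mul_of_mem_Om _ hu, ← hred, hred'.eq, List.length_cons]
  exact ⟨rfl, rfl⟩

end Length

section MultiplicationOfDoubleCosets

variable {D} {w : W} {g h : G}

/-- By induction on `ℓ(w)`: writing `w = v t` with `ℓ(v) < ℓ(w)`, the product `IsI·IwI` lies in
both `IwI ∪ IswI` (T3) and `IsvI·ItI ⊆ IsvI ∪ IswI` (induction and T3), and `w ≠ sv`. -/
theorem simple_mul_mem_IwI {b : B} (hlen : D.len (D.cs.simple b * w) = D.len w + 1)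
    (hg : g ∈ IwI D.I D.π (D.cs.simple b)) (hh : h ∈ IwI D.I D.π w) :
    g * h ∈ IwI D.I D.π (D.cs.simple b * w) := by
  induction hw : D.len w generalizing w b g h with
  | zero =>
    exact mul_mem_IwI_mul_omega (mem_Om_of_len_eq_zero hw) hg hh
  | succ r ih =>
    obtain ⟨v, t, rfl, hv, hsv⟩ := exists_eq_mul_simple (D := D) (w := w) (by omega)
    obtain ⟨nv, rfl⟩ := D.π_surjective v
    obtain ⟨nt, hnt⟩ := D.π_surjective (D.cs.simple t)
    obtain ⟨i, hi, j, hj, rfl⟩ := exists_eq_mul_rep_mul (n := nv * nt) (by simp [hnt]) hh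
    have hsv' : g * i * nv ∈ IwI D.I D.π (D.cs.simple b * D.π nv) :=
      ih (hsv b hlen) (mul_mem_IwI_right hi hg) (rep_mem_IwI nv) (by omega)
    have hright := mul_mem_IwI_or_IwI_mul_simple hsv'
      (mul_mem_IwI_right hj (hnt ▸ rep_mem_IwI nt))
    have hleft := mul_mem_IwI_or_IwI_simple_mul hg hh
    have heq : g * (i * ↑(nv * nt) * j) = g * i * nv * (nt * j) := by push_cast; group
    rw [heq] at hleft ⊢
    rcases hright with h₁ | h₁
    · rcases hleft with h₂ | h₂
      · have hsw : (D.cs.simple b : W) * (D.π nv * D.cs.simple t) = D.π nv := by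
          rw [← eq_of_mem_IwI h₁ h₂, ← mul_assoc, simple_mul_self, one_mul]
        rw [hsw] at hlen
        omega
      · exact h₂
    · rwa [← mul_assoc]

end MultiplicationOfDoubleCosets

section HeckeRelations

variable {u v w x y : W}

lemma iw_one : iw D.I D.π 1 = (D.I : Set G).indicator fun _ => 1 := by
  rw [iw, IwI_one]

lemma cosetSupport_iw : cosetSupport D.I (iw D.I D.π w) = leftCosetsIn D.I (IwI D.I D.π w) := by
  ext c
  rw [← out_mem_IwI_iff]
  refine ⟨mem_of_iw_ne_zero, fun h => ?_⟩
  rw [cosetSupport, Function.mem_support, iw_of_mem h]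
  exact one_ne_zero

lemma isHeckeFunction_iw (w : W) : IsHeckeFunction D.I (iw D.I D.π w) where
  left_invariant i hi g := iw_eq_iw_of_mem_iff (mul_mem_IwI_left_iff hi)
  right_invariant i hi g := iw_eq_iw_of_mem_iff (mul_mem_IwI_right_iff hi)
  finite_cosetSupport := by rw [cosetSupport_iw]; exact (D.TF w).1

lemma cosetSum_iw (w : W) : cosetSum D.I (iw D.I D.π w) = D.q w := by
  have hfin := (D.TF w).1
  have h : cosetSum D.I (iw D.I D.π w) = ∑ᶠ c ∈ leftCosetsIn D.I (IwI D.I D.π w), (1 : ℤ) := by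
    rw [finsum_mem_def]
    refine finsum_congr fun c => ?_
    by_cases hc : c.out ∈ IwI D.I D.π w
    · rw [iw_of_mem hc, Set.indicator_of_mem ((out_mem_IwI_iff c).mp hc)]
    · rw [iw_of_notMem hc, Set.indicator_of_notMem (mt (out_mem_IwI_iff c).mpr hc)]
  rw [h, finsum_mem_eq_finite_toFinset_sum _ hfin, Finset.sum_const, (D.TF w).2,
    Set.ncard_eq_toFinset_card _ hfin, nsmul_one]

lemma q_mul_of_hconv_iw (h : hconv D.I (iw D.I D.π x) (iw D.I D.π y) = iw D.I D.π (x * y)) :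
    D.q (x * y) = D.q x * D.q y := by
  have := cosetSum_hconv (D.isHeckeFunction_iw x).finite_cosetSupport
    (D.isHeckeFunction_iw y).right_invariant (D.isHeckeFunction_iw y).finite_cosetSupport
  rw [h, cosetSum_iw, cosetSum_iw, cosetSum_iw] at this
  exact_mod_cast this

lemma hconv_iw_eq_iw_mul
    (hmul : ∀ a ∈ IwI D.I D.π x, ∀ b ∈ IwI D.I D.π y, a * b ∈ IwI D.I D.π (x * y))
    (hinj : ∀ a₁ ∈ IwI D.I D.π x, ∀ a₂ ∈ IwI D.I D.π x, ∀ b₁ ∈ IwI D.I D.π y, ∀ b₂ ∈ IwI D.I D.π y,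
      a₁ * b₁ = a₂ * b₂ → a₁⁻¹ * a₂ ∈ D.I) :
    hconv D.I (iw D.I D.π x) (iw D.I D.π y) = iw D.I D.π (x * y) := by
  funext g
  by_cases hg : g ∈ IwI D.I D.π (x * y)
  · obtain ⟨nx, rfl⟩ := D.π_surjective x
    obtain ⟨ny, rfl⟩ := D.π_surjective y
    obtain ⟨i, hi, j, hj, rfl⟩ := exists_eq_mul_rep_mul (map_mul D.π nx ny) hg
    obtain ⟨k, hk⟩ := QuotientGroup.mk_out_eq_mul D.I (i * nx)
    set c₀ : G ⧸ D.I := ((i * nx : G) : G ⧸ D.I)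
    have hx : c₀.out ∈ IwI D.I D.π (D.π nx) := by
      rw [hk]; exact mul_mem_IwI_right k.2 (mul_mem_IwI_left hi (rep_mem_IwI nx))
    have hy : c₀.out⁻¹ * (i * ↑(nx * ny) * j) ∈ IwI D.I D.π (D.π ny) := by
      have : ((i * nx : G) * k)⁻¹ * (i * ↑(nx * ny) * j) = (k : G)⁻¹ * ny * j := by
        push_cast; group
      rw [hk, this]
      exact ⟨ny, rfl, _, D.I.inv_mem k.2, j, hj, rfl⟩
    rw [hconv, finsum_eq_single _ c₀, iw_of_mem hx, iw_of_mem hy, iw_of_mem hg, one_mul]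
    intro c hc
    by_contra hne
    have := QuotientGroup.eq.mpr (hinj _ (mem_of_iw_ne_zero (left_ne_zero_of_mul hne)) _ hx _
      (mem_of_iw_ne_zero (right_ne_zero_of_mul hne)) _ hy (by group))
    rw [QuotientGroup.out_eq', QuotientGroup.out_eq'] at this
    exact hc this
  · rw [hconv, iw_of_notMem hg]
    refine finsum_eq_zero_of_forall_eq_zero fun c => ?_
    by_contra hne
    refine hg ?_
    simpa using hmul _ (mem_of_iw_ne_zero (left_ne_zero_of_mul hne)) _
      (mem_of_iw_ne_zero (right_ne_zero_of_mul hne))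

lemma hconv_iw_omega_mul (hu : u ∈ D.Om) (v : W) :
    hconv D.I (iw D.I D.π u) (iw D.I D.π v) = iw D.I D.π (u * v) := by
  obtain ⟨n, hn⟩ := D.π_surjective u
  refine D.hconv_iw_eq_iw_mul (fun a ha b hb => mul_mem_IwI_omega_mul hu ha hb)
    fun a₁ ha₁ a₂ ha₂ _ _ _ _ _ => ?_
  have h := D.I.mul_mem (D.I.inv_mem ((mem_IwI_omega_iff hu hn).mp ha₁))
    ((mem_IwI_omega_iff hu hn).mp ha₂)
  simpa [mul_assoc] using h

lemma hconv_iw_simple_mul {b : B} (hlen : D.len (D.cs.simple b * w) = D.len w + 1) :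
    hconv D.I (iw D.I D.π (D.cs.simple b)) (iw D.I D.π w) = iw D.I D.π (D.cs.simple b * w) := by
  refine D.hconv_iw_eq_iw_mul (fun a ha b hb => simple_mul_mem_IwI hlen ha hb)
    fun a₁ ha₁ a₂ ha₂ b₁ hb₁ b₂ hb₂ heq => ?_
  refine (mul_mem_I_or_IwI_simple (by simpa [simple_inv] using inv_mem_IwI ha₁) ha₂).resolve_right
    fun h => ?_
  have hb₁' : b₁ = a₁⁻¹ * a₂ * b₂ := by rw [mul_assoc, ← heq, inv_mul_cancel_left]
  have := eq_of_mem_IwI hb₁ (hb₁' ▸ simple_mul_mem_IwI hlen h hb₂)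
  rw [← this] at hlen
  omega

lemma q_eq_one_of_mem_Om (hu : u ∈ D.Om) : D.q u = 1 := by
  have h := D.q_mul_of_hconv_iw (D.hconv_iw_omega_mul hu u⁻¹)
  rw [mul_inv_cancel, (D.TF 1).2, IwI_one] at h
  have h1 : leftCosetsIn D.I (D.I : Set G) = {((1 : G) : G ⧸ D.I)} := by
    ext c
    simp only [leftCosetsIn, Set.mem_image, Set.mem_singleton_iff]
    refine ⟨fun ⟨g, hg, hc⟩ => hc ▸ (QuotientGroup.eq.mpr (by simpa using hg)), fun hc =>
      ⟨1, D.I.one_mem, hc.symm⟩⟩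
  rw [h1, Set.ncard_singleton] at h
  exact Nat.eq_one_of_mul_eq_one_right h.symm

end HeckeRelations

section QuadraticRelation

variable (b : B)

lemma iw_simple_inv (g : G) : iw D.I D.π (D.cs.simple b) g⁻¹ = iw D.I D.π (D.cs.simple b) g :=
  iw_eq_iw_of_mem_iff ⟨fun h => by simpa [simple_inv] using inv_mem_IwI h,
    fun h => by simpa [simple_inv] using inv_mem_IwI h⟩

lemma notMem_IwI_simple_of_mem_I {g : G} (hg : g ∈ D.I) : g ∉ IwI D.I D.π (D.cs.simple b) :=
  fun h => simple_ne_one b (eq_of_mem_IwI h (by rwa [IwI_one]))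

lemma hconv_iw_simple_self_apply_of_mem_I {x : G} (hx : x ∈ D.I) :
    hconv D.I (iw D.I D.π (D.cs.simple b)) (iw D.I D.π (D.cs.simple b)) x =
      D.q (D.cs.simple b) := by
  rw [← cosetSum_iw]
  refine finsum_congr fun c => ?_
  rw [(D.isHeckeFunction_iw _).right_invariant x hx, iw_simple_inv]
  by_cases hc : c.out ∈ IwI D.I D.π (D.cs.simple b)
  · rw [iw_of_mem hc, mul_one]
  · rw [iw_of_notMem hc, mul_zero]

/-- For `x ∈ IsI`, the cosets `yI ⊆ IsI` contributing to `(i_s ⋆ i_s)(x)` are all but `xI`,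
since `y⁻¹x ∈ I ∪ IsI`. -/
lemma hconv_iw_simple_self_apply_of_mem_IwI {x : G} (hx : x ∈ IwI D.I D.π (D.cs.simple b)) :
    hconv D.I (iw D.I D.π (D.cs.simple b)) (iw D.I D.π (D.cs.simple b)) x =
      D.q (D.cs.simple b) - 1 := by
  classical
  have hcx (c : G ⧸ D.I) : c.out⁻¹ * x ∈ D.I ↔ c = x := by
    rw [← QuotientGroup.eq, QuotientGroup.out_eq']
  have hterm (c : G ⧸ D.I) : iw D.I D.π (D.cs.simple b) c.out *
      iw D.I D.π (D.cs.simple b) (c.out⁻¹ * x) =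
        iw D.I D.π (D.cs.simple b) c.out - if c = x then 1 else 0 := by
    by_cases hc : c.out ∈ IwI D.I D.π (D.cs.simple b)
    · rw [iw_of_mem hc, one_mul]
      rcases mul_mem_I_or_IwI_simple (by simpa [simple_inv] using inv_mem_IwI hc) hx with h | h
      · rw [if_pos ((hcx c).mp h), iw_of_notMem (D.notMem_IwI_simple_of_mem_I b h), sub_self]
      · rw [if_neg fun hc' => D.notMem_IwI_simple_of_mem_I b ((hcx c).mpr hc') h, iw_of_mem h,
          sub_zero]
    · rw [if_neg (by rintro rfl; exact hc ((out_mem_IwI_iff _).mpr ⟨x, hx, rfl⟩)),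
        iw_of_notMem hc, zero_mul, sub_zero]
  have hsingle : Function.HasFiniteSupport fun c : G ⧸ D.I => if c = x then (1 : ℤ) else 0 :=
    (Set.finite_singleton (x : G ⧸ D.I)).subset fun c hc => by_contra fun h => hc (if_neg h)
  rw [hconv, finsum_congr hterm,
    finsum_sub_distrib (D.isHeckeFunction_iw _).finite_cosetSupport hsingle,
    finsum_eq_single _ (x : G ⧸ D.I) fun c hc => if_neg hc, if_pos rfl]
  exact congrArg (· - 1) (D.cosetSum_iw _)

lemma hconv_iw_simple_self_apply_of_notMem {x : G} (hx₁ : x ∉ D.I)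
    (hxs : x ∉ IwI D.I D.π (D.cs.simple b)) :
    hconv D.I (iw D.I D.π (D.cs.simple b)) (iw D.I D.π (D.cs.simple b)) x = 0 := by
  refine finsum_eq_zero_of_forall_eq_zero fun c => by_contra fun hne => ?_
  have h := mul_mem_I_or_IwI_simple (mem_of_iw_ne_zero (left_ne_zero_of_mul hne))
    (mem_of_iw_ne_zero (right_ne_zero_of_mul hne))
  rw [mul_inv_cancel_left] at h
  exact h.elim hx₁ hxs

lemma hconv_iw_simple_self :
    hconv D.I (iw D.I D.π (D.cs.simple b)) (iw D.I D.π (D.cs.simple b)) =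
      (D.q (D.cs.simple b) : ℤ) • iw D.I D.π 1 +
        ((D.q (D.cs.simple b) : ℤ) - 1) • iw D.I D.π (D.cs.simple b) := by
  funext x
  simp only [Pi.add_apply, Pi.smul_apply, smul_eq_mul]
  by_cases hx₁ : x ∈ D.I
  · rw [D.hconv_iw_simple_self_apply_of_mem_I b hx₁, iw_of_mem (by rwa [IwI_one]),
      iw_of_notMem (D.notMem_IwI_simple_of_mem_I b hx₁)]
    ring
  by_cases hxs : x ∈ IwI D.I D.π (D.cs.simple b)
  · rw [D.hconv_iw_simple_self_apply_of_mem_IwI b hxs, iw_of_notMem (by rwa [IwI_one]),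
      iw_of_mem hxs]
    ring
  · rw [D.hconv_iw_simple_self_apply_of_notMem b hx₁ hxs, iw_of_notMem (by rwa [IwI_one]),
      iw_of_notMem hxs]
    ring

end QuadraticRelation

section Star

/-- `q_s·i_s⁻¹`, the factor of `iwStar` attached to `s`. -/
noncomputable def iwSimpleStar (b : B) : G → ℤ :=
  iw D.I D.π (D.cs.simple b) + (1 - (D.q (D.cs.simple b) : ℤ)) • iw D.I D.π 1

lemma isHeckeFunction_iwSimpleStar (b : B) : IsHeckeFunction D.I (D.iwSimpleStar b) :=
  (D.isHeckeFunction_iw _).add ((D.isHeckeFunction_iw 1).smul _)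

lemma hconv_iw_iwSimpleStar (b : B) :
    hconv D.I (iw D.I D.π (D.cs.simple b)) (D.iwSimpleStar b) =
      (D.q (D.cs.simple b) : ℤ) • (D.I : Set G).indicator fun _ => 1 := by
  rw [iwSimpleStar, hconv_add_right (D.isHeckeFunction_iw _).finite_cosetSupport, hconv_smul_right,
    hconv_iw_simple_self, iw_one, hconv_indicator_right (D.isHeckeFunction_iw _).right_invariant]
  module

lemma hconv_iwSimpleStar_iw (b : B) :
    hconv D.I (D.iwSimpleStar b) (iw D.I D.π (D.cs.simple b)) =
      (D.q (D.cs.simple b) : ℤ) • (D.I : Set G).indicator fun _ => 1 := by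
  rw [iwSimpleStar, hconv_add_left (D.isHeckeFunction_iw _).finite_cosetSupport
    ((D.isHeckeFunction_iw 1).smul _).finite_cosetSupport, hconv_smul_left,
    hconv_iw_simple_self, iw_one, hconv_indicator_left (D.isHeckeFunction_iw _).left_invariant]
  module

lemma iwStar_cons (b : B) (l : List B) (u : W) :
    iwStar D (b :: l) u = hconv D.I (iwStar D l u) (D.iwSimpleStar b) := by
  rw [iwStar, List.reverse_cons, List.map_append, List.foldl_append]
  rfl

lemma isHeckeFunction_iwStar (l : List B) (u : W) : IsHeckeFunction D.I (iwStar D l u) := by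
  induction l with
  | nil => exact D.isHeckeFunction_iw u⁻¹
  | cons b l ih => exact D.iwStar_cons b l u ▸ ih.hconv (D.isHeckeFunction_iwSimpleStar b)

end Star

end IwahoriHeckeSetup

/-- If `w = s₁⋯s_r·u` (with the `s_i` simple, `u ∈ Ω`, `r = ℓ(w)`) is a reduced decomposition
of `w ∈ W̃`, then `i_w ⋆ i_w^* = i_w^* ⋆ i_w = q_w · i_1` in `H(G,I)`. -/
theorem iw_mul_iwStar {G W B : Type} [Group G] [Group W]
    {M : CoxeterMatrix B} (D : IwahoriHeckeSetup G W B M)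
    (w : W) (l : List B) (u : W) (hu : u ∈ D.Om)
    (hw : w = (D.cs.wordProd l : W) * u) (hred : l.length = D.len w) :
    hconv D.I (iw D.I D.π w) (iwStar D l u) =
      (fun g => (D.q w : ℤ) * iw D.I D.π 1 g) ∧
    hconv D.I (iwStar D l u) (iw D.I D.π w) =
      (fun g => (D.q w : ℤ) * iw D.I D.π 1 g) := by
  change _ = (D.q w : ℤ) • iw D.I D.π 1 ∧ _ = (D.q w : ℤ) • iw D.I D.π 1
  induction l generalizing w with
  | nil =>
    have hstar : iwStar D [] u = iw D.I D.π u⁻¹ := rfl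
    rw [show w = u by simpa using hw, hstar, D.q_eq_one_of_mem_Om hu, Nat.cast_one, one_smul]
    exact ⟨by simpa using D.hconv_iw_omega_mul hu u⁻¹,
      by simpa using D.hconv_iw_omega_mul (D.Om.inv_mem hu) u⟩
  | cons b l ih =>
    obtain ⟨hred', hlen⟩ := D.len_of_reduced_cons hu (hw ▸ hred)
    obtain ⟨ih₁, ih₂⟩ := ih _ rfl hred'
    have hsw := D.hconv_iw_simple_mul hlen
    have hw' : w = D.cs.simple b * (D.cs.wordProd l * u) := by
      rw [hw, D.cs.wordProd_cons, Subgroup.coe_mul, mul_assoc]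
    rw [D.iw_one] at ih₁ ih₂ ⊢
    rw [hw', ← hsw, D.q_mul_of_hconv_iw hsw, D.iwStar_cons, Nat.cast_mul]
    have hs := D.isHeckeFunction_iw (D.cs.simple b)
    constructor
    · exact hconv_hconv_rev_eq_smul hs (D.isHeckeFunction_iw _)
        (D.isHeckeFunction_iwSimpleStar b) (D.isHeckeFunction_iwStar l u)
        (D.hconv_iw_iwSimpleStar b) ih₁
    · rw [mul_comm]
      exact hconv_hconv_rev_eq_smul (D.isHeckeFunction_iwStar l u)
        (D.isHeckeFunction_iwSimpleStar b) (D.isHeckeFunction_iw _) hs ih₂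
        (D.hconv_iwSimpleStar_iw b)
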